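/- Let m, n ∈ ℤ, set β = m√−d + n, and assume the ideal βO_K is coprime to D·O_K. Then: (i) if m ≡ 0 (mod 4) and n > 0, then ε(β) = (−D/n); (ii) if m ≡ 2 (mod 4) and n > 0, then ε(β) = −(−D/n); (iii) if n ≡ 0 (mod 4) and m > 0, then ε(β) = i·(−1)^{(m−1)/2}·(n/d); (iv) if n ≡ 2 (mod 4) and m > 0, then ε(β) = −i·(−1)^{(m−1)/2}·(n/d). Here (−D/n) and (n/d) denote Jacobi symbols (in cases (i),(ii) n is odd and positive; in cases (iii),(iv) m is odd and positive and d is odd). -/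

import Mathlib

/-!
Because `𝓞 K = ℤ[w]` with `w ^ 2 = -d`, necessarily `d ≡ 1 (mod 4)`: otherwise `(1 + w) / 2`
would be an algebraic integer outside `ℤ[w]`. Then `2 ∈ 𝔭₂ ^ 2`, so `2 𝔭₂ ⊆ 𝔭₂ ^ 3`, and
`a w + b ∈ 𝔭₂ ^ 3` as soon as `a` is even and `a ≡ b (mod 4)`. From `m` and `n` modulo `4` one
therefore reads off the power `w ^ j ≡ β (mod 𝔭₂ ^ 3)`, while `β ≡ n (mod w)`, so
`ε(β) = i ^ j (n/d)`. For odd `n > 0`, quadratic reciprocity with `d ≡ 1 (mod 4)` gives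
`(-4d/n) = χ₄(n) (n/d)`.
-/

open NumberField FractionalIdeal
open scoped nonZeroDivisors

noncomputable section

variable {K : Type*} [Field K] [NumberField K]

/-- The group `I(f)` of invertible fractional ideals of `K` coprime to the modulus `f`:
`a ∈ I(f)` iff `a = b * c⁻¹` with `b, c` integral ideals coprime to `f`. -/
def coprimeIdeals (f : Ideal (𝓞 K)) : Subgroup (FractionalIdeal (𝓞 K)⁰ K)ˣ where
  carrier := {a | ∃ b c : Ideal (𝓞 K), IsCoprime b f ∧ IsCoprime c f ∧
    (a : FractionalIdeal (𝓞 K)⁰ K) * (c : FractionalIdeal (𝓞 K)⁰ K) =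
      (b : FractionalIdeal (𝓞 K)⁰ K)}
  one_mem' := ⟨1, 1, isCoprime_one_left, isCoprime_one_left, by simp⟩
  mul_mem' := by
    rintro a a' ⟨b, c, hb, hc, h⟩ ⟨b', c', hb', hc', h'⟩
    refine ⟨b * b', c * c', hb.mul_left hb', hc.mul_left hc', ?_⟩
    rw [coeIdeal_mul, coeIdeal_mul, Units.val_mul, mul_mul_mul_comm, h, h']
  inv_mem' := by
    rintro a ⟨b, c, hb, hc, h⟩
    refine ⟨c, b, hc, hb, ?_⟩
    have h1 : ((a⁻¹ : (FractionalIdeal (𝓞 K)⁰ K)ˣ) : FractionalIdeal (𝓞 K)⁰ K) * a = 1 := by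
      rw [← Units.val_mul, inv_mul_cancel, Units.val_one]
    calc ((a⁻¹ : (FractionalIdeal (𝓞 K)⁰ K)ˣ) : FractionalIdeal (𝓞 K)⁰ K) * b
        = ((a⁻¹ : (FractionalIdeal (𝓞 K)⁰ K)ˣ) : FractionalIdeal (𝓞 K)⁰ K) *
          ((a : FractionalIdeal (𝓞 K)⁰ K) * c) := by rw [h]
      _ = c := by rw [← mul_assoc, h1, one_mul]

/-- `χ : I(f) → ℂˣ` is a Hecke character of `K` of type `ε` modulo `f`, i.e.
`χ(αO_K) = ε(α)·α` for every `α = β/γ ∈ K^×` coprime to `f`. -/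
def IsHeckeChar [Algebra K ℂ] {f : Ideal (𝓞 K)} (ε : ((𝓞 K) ⧸ f)ˣ →* ℂˣ)
    (χ : coprimeIdeals f →* ℂˣ) : Prop :=
  ∀ β γ : 𝓞 K, IsCoprime (Ideal.span {β}) f → IsCoprime (Ideal.span {γ}) f →
  ∀ u v : ((𝓞 K) ⧸ f)ˣ, (u : (𝓞 K) ⧸ f) = Ideal.Quotient.mk f β →
    (v : (𝓞 K) ⧸ f) = Ideal.Quotient.mk f γ →
  ∀ a : coprimeIdeals f,
    ((a : (FractionalIdeal (𝓞 K)⁰ K)ˣ) : FractionalIdeal (𝓞 K)⁰ K) =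
      spanSingleton (𝓞 K)⁰ (algebraMap (𝓞 K) K β / algebraMap (𝓞 K) K γ) →
    (χ a : ℂ) = (ε u : ℂ) * ((ε v : ℂ))⁻¹ *
      algebraMap K ℂ (algebraMap (𝓞 K) K β / algebraMap (𝓞 K) K γ)

/-- `K(χ)`: the subfield of `ℂ` generated over `K` by the values of `χ`. -/
def heckeField [Algebra K ℂ] {f : Ideal (𝓞 K)} (χ : coprimeIdeals f →* ℂˣ) :
    IntermediateField K ℂ :=
  IntermediateField.adjoin K (Set.range fun a : coprimeIdeals f => ((χ a : ℂˣ) : ℂ))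

/-- `P(f)`: the subgroup of `I(f)` consisting of principal fractional ideals. -/
def principalCoprime (f : Ideal (𝓞 K)) : Subgroup ↥(coprimeIdeals f) :=
  Subgroup.comap (coprimeIdeals f).subtype (toPrincipalIdeal (𝓞 K) K).range

/-- `H(f) = {a ∈ I(f) : a² ∈ P(f)}`. -/
def genusSet (f : Ideal (𝓞 K)) : Set ↥(coprimeIdeals f) :=
  {a | a ^ 2 ∈ principalCoprime f}

/-- `T_g`: the subfield of `ℂ` generated over `K` by the values `χ(a)`, `a ∈ H(f)`. -/
def genusField [Algebra K ℂ] {f : Ideal (𝓞 K)} (χ : coprimeIdeals f →* ℂˣ) :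
    IntermediateField K ℂ :=
  IntermediateField.adjoin K ((fun a => ((χ a : ℂˣ) : ℂ)) '' genusSet f)

/-- `L`: the subfield of `ℂ` generated over `K` by the values of `ε`. -/
def epsField [Algebra K ℂ] {f : Ideal (𝓞 K)} (ε : ((𝓞 K) ⧸ f)ˣ →* ℂˣ) :
    IntermediateField K ℂ :=
  IntermediateField.adjoin K (Set.range fun u => ((ε u : ℂˣ) : ℂ))

lemma chi_mem_heckeField [Algebra K ℂ] {f : Ideal (𝓞 K)} (χ : coprimeIdeals f →* ℂˣ)
    (a : coprimeIdeals f) : ((χ a : ℂˣ) : ℂ) ∈ heckeField χ :=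
  IntermediateField.subset_adjoin K _ ⟨a, rfl⟩

/-- `ξ` is a generator of `μ₂(ε)`, the group of elements of 2-power order
in the image of `ε`. -/
def IsMu2Gen {f : Ideal (𝓞 K)} (ε : ((𝓞 K) ⧸ f)ˣ →* ℂˣ) (ξ : ℂˣ) : Prop :=
  (∃ u, ε u = ξ) ∧ (∃ k : ℕ, ξ ^ 2 ^ k = 1) ∧
  ∀ ζ : ℂˣ, (∃ u, ε u = ζ) → (∃ k : ℕ, ζ ^ 2 ^ k = 1) → ∃ m : ℕ, ζ = ξ ^ m

/-- Condition (3.6) on `ε`. -/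
def Cond36 (D : ℕ) {f : Ideal (𝓞 K)} (ε : ((𝓞 K) ⧸ f)ˣ →* ℂˣ) : Prop :=
  (∀ u, (ε u) ^ 12 = 1) ∧ (¬ 3 ∣ D → ∀ u, (ε u) ^ 4 = 1) ∧
    (¬ 2 ∣ D → ∀ u, (ε u) ^ 6 = 1) ∧ (Nat.gcd 6 D = 1 → ∀ u, (ε u) ^ 2 = 1)

end

section QuadraticOrder

variable {R : Type*} [CommRing R] {w : R} {d : ℕ}

theorem exists_eq_intCast_add_intCast_mul (hw : w ^ 2 = -(d : R)) {x : R}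
    (hx : x ∈ Algebra.adjoin ℤ {w}) : ∃ a b : ℤ, x = a + b * w := by
  induction hx using Algebra.adjoin_induction with
  | mem x hx => exact ⟨0, 1, by rw [Set.mem_singleton_iff.mp hx]; simp⟩
  | algebraMap r => exact ⟨r, 0, by simp⟩
  | add x y _ _ ihx ihy =>
    obtain ⟨a, b, rfl⟩ := ihx
    obtain ⟨a', b', rfl⟩ := ihy
    exact ⟨a + a', b + b', by push_cast; ring⟩
  | mul x y _ _ ihx ihy =>
    obtain ⟨a, b, rfl⟩ := ihx
    obtain ⟨a', b', rfl⟩ := ihy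
    exact ⟨a * a' - b * b' * d, a * b' + b * a', by push_cast; linear_combination (b * b' : R) * hw⟩

theorem eq_zero_of_intCast_add_intCast_mul_eq_zero [CharZero R] (hd : 0 < d)
    (hw : w ^ 2 = -(d : R)) {a b : ℤ} (h : (a : R) + b * w = 0) : a = 0 ∧ b = 0 := by
  have hnorm : ((a ^ 2 + b ^ 2 * d : ℤ) : R) = 0 := by
    push_cast
    linear_combination (a - b * w) * h + (b : R) ^ 2 * hw
  have : a ^ 2 + b ^ 2 * d = 0 := by exact_mod_cast hnorm
  constructor <;> nlinarith [sq_nonneg a, sq_nonneg b]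

theorem even_and_even_of_two_mul_eq [CharZero R] (hd : 0 < d) (hw : w ^ 2 = -(d : R))
    (hgen : Algebra.adjoin ℤ {w} = ⊤) {x : R} {a b : ℤ} (h : 2 * x = a + b * w) :
    Even a ∧ Even b := by
  obtain ⟨a', b', rfl⟩ := exists_eq_intCast_add_intCast_mul hw (x := x) (hgen ▸ Algebra.mem_top)
  obtain ⟨ha, hb⟩ := eq_zero_of_intCast_add_intCast_mul_eq_zero (a := 2 * a' - a)
    (b := 2 * b' - b) hd hw (by push_cast; linear_combination h)
  exact ⟨⟨a', by omega⟩, ⟨b', by omega⟩⟩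

theorem not_isUnit_two_of_adjoin_eq_top [CharZero R] (hd : 0 < d) (hw : w ^ 2 = -(d : R))
    (hgen : Algebra.adjoin ℤ {w} = ⊤) : ¬ IsUnit (2 : R) := by
  rintro ⟨v, hv⟩
  exact Int.not_even_one (even_and_even_of_two_mul_eq hd hw hgen (x := ↑v⁻¹) (a := 1) (b := 0)
    (by rw [← hv, Units.mul_inv]; simp)).1

end QuadraticOrder

theorem mod_four_eq_one_of_adjoin_eq_top {K : Type*} [Field K] [CharZero K] {w : 𝓞 K} {d : ℕ}
    (hw : w ^ 2 = -(d : 𝓞 K)) (hgen : Algebra.adjoin ℤ {w} = ⊤) (hd : d % 2 = 1) :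
    d % 4 = 1 := by
  by_contra h
  obtain ⟨c, hc⟩ : ∃ c : ℕ, d = 4 * c + 3 := ⟨d / 4, by omega⟩
  have hwK : (w : K) ^ 2 = -(d : K) := by simpa using congrArg ((↑) : 𝓞 K → K) hw
  have hz : IsIntegral ℤ ((1 + (w : K)) / 2) := by
    refine ⟨Polynomial.X ^ 2 - Polynomial.X + Polynomial.C ((c : ℤ) + 1), by monicity!, ?_⟩
    simp only [Polynomial.eval₂_add, Polynomial.eval₂_sub, Polynomial.eval₂_X_pow,
      Polynomial.eval₂_X, Polynomial.eval₂_C]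
    rw [hc] at hwK
    push_cast at hwK ⊢
    linear_combination hwK / 4
  obtain ⟨z, hzK⟩ : ∃ z : 𝓞 K, (z : K) = (1 + w) / 2 := ⟨⟨_, hz⟩, rfl⟩
  have h2z : 2 * z = 1 + w := by
    apply RingOfIntegers.coe_injective
    simp only [map_mul, map_add, map_ofNat, map_one, ← RingOfIntegers.coe_eq_algebraMap, hzK]
    ring
  exact Int.not_even_one (even_and_even_of_two_mul_eq (a := 1) (b := 1) (by omega) hw hgen
    (by rw [h2z]; push_cast; ring)).1

section PrimeAboveTwo

variable {R : Type*} [CommRing R] {w : R} {d : ℕ}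

theorem two_mem_span_two_one_add_sq (hw : w ^ 2 = -(d : R)) (hd : d % 4 = 1) :
    (2 : R) ∈ Ideal.span {2, 1 + w} ^ 2 := by
  obtain ⟨e, rfl⟩ : ∃ e, d = 4 * e + 1 := ⟨d / 4, by omega⟩
  have h2 : (2 : R) ∈ Ideal.span {2, 1 + w} := Ideal.subset_span (by simp)
  have h1w : 1 + w ∈ Ideal.span {(2 : R), 1 + w} := Ideal.subset_span (by simp)
  have key : (2 : R) = 2 * (1 + w) - (1 + w) * (1 + w) - e * (2 * 2) := by
    push_cast at hw
    linear_combination hw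
  have hmem : 2 * (1 + w) - (1 + w) * (1 + w) - e * (2 * 2) ∈ Ideal.span {(2 : R), 1 + w} ^ 2 := by
    rw [sq]
    exact sub_mem (sub_mem (Ideal.mul_mem_mul h2 h1w) (Ideal.mul_mem_mul h1w h1w))
      (Ideal.mul_mem_left _ _ (Ideal.mul_mem_mul h2 h2))
  rwa [← key] at hmem

theorem mem_span_two_one_add_pow_three (hw : w ^ 2 = -(d : R)) (hd : d % 4 = 1) {x : R}
    {a b : ℤ} (ha : 2 ∣ a) (hab : 4 ∣ a - b) (hx : x = a * w + b) :
    x ∈ Ideal.span {2, 1 + w} ^ 3 := by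
  obtain ⟨k, rfl⟩ := ha
  obtain ⟨t, ht⟩ : ∃ t, b = 2 * k + 4 * t := ⟨(b - 2 * k) / 4, by omega⟩
  have hx' : x = 2 * (k * (1 + w) + t * 2) := by rw [hx, ht]; push_cast; ring
  rw [hx', pow_succ]
  refine Ideal.mul_mem_mul (two_mem_span_two_one_add_sq hw hd) (add_mem ?_ ?_) <;>
    exact Ideal.mul_mem_left _ _ (Ideal.subset_span (by simp))

theorem exists_sub_pow_mem_and_I_pow_eq_χ₄ (hw : w ^ 2 = -(d : R)) (hd : d % 4 = 1) {m n : ℤ}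
    (hm : m % 4 = 0) (hn : n % 2 = 1) :
    ∃ j : ℕ, (m : R) * w + n - w ^ j ∈ Ideal.span {2, 1 + w} ^ 3 ∧
      Complex.I ^ j = ZMod.χ₄ n := by
  rcases (by omega : n % 4 = 1 ∨ n % 4 = 3) with hn4 | hn4
  · refine ⟨0, mem_span_two_one_add_pow_three hw hd (a := m) (b := n - 1) (by omega) (by omega)
      (by push_cast; ring), ?_⟩
    simp [ZMod.χ₄_int_one_mod_four hn4]
  · refine ⟨2, mem_span_two_one_add_pow_three hw hd (a := m) (b := n + d) (by omega) (by omega)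
      (by push_cast; linear_combination -hw), ?_⟩
    simp [ZMod.χ₄_int_three_mod_four hn4]

theorem exists_sub_pow_mem_and_I_pow_eq_neg_χ₄ (hw : w ^ 2 = -(d : R)) (hd : d % 4 = 1)
    {m n : ℤ} (hm : m % 4 = 2) (hn : n % 2 = 1) :
    ∃ j : ℕ, (m : R) * w + n - w ^ j ∈ Ideal.span {2, 1 + w} ^ 3 ∧
      Complex.I ^ j = -ZMod.χ₄ n := by
  rcases (by omega : n % 4 = 1 ∨ n % 4 = 3) with hn4 | hn4
  · refine ⟨2, mem_span_two_one_add_pow_three hw hd (a := m) (b := n + d) (by omega) (by omega)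
      (by push_cast; linear_combination -hw), ?_⟩
    simp [ZMod.χ₄_int_one_mod_four hn4]
  · refine ⟨0, mem_span_two_one_add_pow_three hw hd (a := m) (b := n - 1) (by omega) (by omega)
      (by push_cast; ring), ?_⟩
    simp [ZMod.χ₄_int_three_mod_four hn4]

theorem exists_sub_pow_mem_and_I_pow_eq_I_mul (hw : w ^ 2 = -(d : R)) (hd : d % 4 = 1)
    {m n : ℤ} (hn : n % 4 = 0) (hm : m % 2 = 1) :
    ∃ j : ℕ, (m : R) * w + n - w ^ j ∈ Ideal.span {2, 1 + w} ^ 3 ∧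
      Complex.I ^ j = Complex.I * (-1) ^ ((m - 1) / 2) := by
  rcases (by omega : m % 4 = 1 ∨ m % 4 = 3) with hm4 | hm4
  · refine ⟨1, mem_span_two_one_add_pow_three hw hd (a := m - 1) (b := n) (by omega) (by omega)
      (by push_cast; ring), ?_⟩
    simp [(Int.even_iff.mpr (by omega : (m - 1) / 2 % 2 = 0)).neg_one_zpow]
  · refine ⟨3, mem_span_two_one_add_pow_three hw hd (a := m + d) (b := n) (by omega) (by omega)
      (by push_cast; linear_combination -w * hw), ?_⟩
    simp [(Int.odd_iff.mpr (by omega : (m - 1) / 2 % 2 = 1)).neg_one_zpow, pow_succ]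

theorem exists_sub_pow_mem_and_I_pow_eq_neg_I_mul (hw : w ^ 2 = -(d : R)) (hd : d % 4 = 1)
    {m n : ℤ} (hn : n % 4 = 2) (hm : m % 2 = 1) :
    ∃ j : ℕ, (m : R) * w + n - w ^ j ∈ Ideal.span {2, 1 + w} ^ 3 ∧
      Complex.I ^ j = -(Complex.I * (-1) ^ ((m - 1) / 2)) := by
  rcases (by omega : m % 4 = 1 ∨ m % 4 = 3) with hm4 | hm4
  · refine ⟨3, mem_span_two_one_add_pow_three hw hd (a := m + d) (b := n) (by omega) (by omega)
      (by push_cast; linear_combination -w * hw), ?_⟩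
    simp [(Int.even_iff.mpr (by omega : (m - 1) / 2 % 2 = 0)).neg_one_zpow, pow_succ]
  · refine ⟨1, mem_span_two_one_add_pow_three hw hd (a := m - 1) (b := n) (by omega) (by omega)
      (by push_cast; ring), ?_⟩
    simp [(Int.odd_iff.mpr (by omega : (m - 1) / 2 % 2 = 1)).neg_one_zpow]

end PrimeAboveTwo

theorem jacobiSym_neg_four_mul {d n : ℕ} (hd : d % 4 = 1) (hn : Odd n) :
    jacobiSym (-(4 * d : ℤ)) n = ZMod.χ₄ n * jacobiSym n d := by
  have h2n : (2 : ℤ).gcd n = 1 := by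
    rw [show (2 : ℤ) = ((2 : ℕ) : ℤ) from rfl, Int.gcd_natCast_natCast]
    exact Nat.coprime_two_left.mpr hn
  rw [show -(4 * d : ℤ) = -1 * (2 ^ 2 * d) by ring, jacobiSym.mul_left, jacobiSym.mul_left,
    jacobiSym.at_neg_one hn, jacobiSym.sq_one' h2n,
    jacobiSym.quadratic_reciprocity_one_mod_four hd hn, one_mul]

theorem eps_value_on_m_sqrt_add_n_general
    (D d : ℕ) (hd : d = D / 4) (h4 : 4 ∣ D) (h8 : ¬ 8 ∣ D)
    (K : Type) [Field K] [NumberField K]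
    (w : 𝓞 K) (hw : w ^ 2 = -(d : 𝓞 K))
    (hgen : Algebra.adjoin ℤ {w} = ⊤)
    (p2 : Ideal (𝓞 K)) (hp2 : p2 = Ideal.span {2, 1 + w})
    (f : Ideal (𝓞 K))
    (ε : ((𝓞 K) ⧸ f)ˣ →* ℂˣ)
    (hε : ∀ (u : ((𝓞 K) ⧸ f)ˣ) (β : 𝓞 K) (j : ℕ) (n : ℤ),
      (u : (𝓞 K) ⧸ f) = Ideal.Quotient.mk f β →
      β - w ^ j ∈ p2 ^ 3 → β - (n : 𝓞 K) ∈ Ideal.span {w} →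
      ((ε u : ℂˣ) : ℂ) = Complex.I ^ j * ((jacobiSym n d : ℤ) : ℂ)) :
    ∀ m n : ℤ, ∀ u : ((𝓞 K) ⧸ f)ˣ,
      IsCoprime (Ideal.span {((m : 𝓞 K) * w + (n : 𝓞 K))}) (Ideal.span {(D : 𝓞 K)}) →
      (u : (𝓞 K) ⧸ f) = Ideal.Quotient.mk f ((m : 𝓞 K) * w + (n : 𝓞 K)) →
      ((m % 4 = 0 → 0 < n →
          ((ε u : ℂˣ) : ℂ) = ((jacobiSym (-(D : ℤ)) n.toNat : ℤ) : ℂ)) ∧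
        (m % 4 = 2 → 0 < n →
          ((ε u : ℂˣ) : ℂ) = -((jacobiSym (-(D : ℤ)) n.toNat : ℤ) : ℂ)) ∧
        (n % 4 = 0 → 0 < m →
          ((ε u : ℂˣ) : ℂ) =
            Complex.I * (-1 : ℂ) ^ ((m - 1) / 2) * ((jacobiSym n d : ℤ) : ℂ)) ∧
        (n % 4 = 2 → 0 < m →
          ((ε u : ℂˣ) : ℂ) =
            -(Complex.I * (-1 : ℂ) ^ ((m - 1) / 2) * ((jacobiSym n d : ℤ) : ℂ)))) := by
  intro m n u hcop hu
  subst hp2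
  obtain rfl : D = 4 * d := by omega
  have hd4 : d % 4 = 1 := mod_four_eq_one_of_adjoin_eq_top hw hgen (by omega)
  have hpar : m % 2 = 1 ∨ n % 2 = 1 := by
    by_contra! h
    obtain ⟨m', rfl⟩ : 2 ∣ m := by omega
    obtain ⟨n', rfl⟩ : 2 ∣ n := by omega
    exact not_isUnit_two_of_adjoin_eq_top (by omega) hw hgen
      (((Ideal.isCoprime_span_singleton_iff _ _).mp hcop).isUnit_of_dvd'
        ⟨m' * w + n', by push_cast; ring⟩ ⟨2 * d, by push_cast; ring⟩)
  have hval (j : ℕ) (hj : (m : 𝓞 K) * w + n - w ^ j ∈ Ideal.span {2, 1 + w} ^ 3) :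
      (ε u : ℂ) = Complex.I ^ j * jacobiSym n d :=
    hε u _ j n hu hj (Ideal.mem_span_singleton'.mpr ⟨m, by ring⟩)
  refine ⟨fun hm hn => ?_, fun hm hn => ?_, fun hn _ => ?_, fun hn _ => ?_⟩
  · obtain ⟨j, hj, hI⟩ := exists_sub_pow_mem_and_I_pow_eq_χ₄ hw hd4 hm (by omega : n % 2 = 1)
    lift n to ℕ using hn.le
    rw [hval j hj, hI, Int.toNat_natCast, Nat.cast_mul, Nat.cast_ofNat,
      jacobiSym_neg_four_mul hd4 (Nat.odd_iff.mpr (by omega))]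
    push_cast
    ring
  · obtain ⟨j, hj, hI⟩ := exists_sub_pow_mem_and_I_pow_eq_neg_χ₄ hw hd4 hm (by omega : n % 2 = 1)
    lift n to ℕ using hn.le
    rw [hval j hj, hI, Int.toNat_natCast, Nat.cast_mul, Nat.cast_ofNat,
      jacobiSym_neg_four_mul hd4 (Nat.odd_iff.mpr (by omega))]
    push_cast
    ring
  · obtain ⟨j, hj, hI⟩ := exists_sub_pow_mem_and_I_pow_eq_I_mul hw hd4 hn (by omega : m % 2 = 1)
    rw [hval j hj, hI]
  · obtain ⟨j, hj, hI⟩ := exists_sub_pow_mem_and_I_pow_eq_neg_I_mul hw hd4 hn (by omega : m % 2 = 1)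
    rw [hval j hj, hI, neg_mul]

/-- The values of `ε` on `β = m√−d + n` coprime to `D·O_K`. -/
theorem eps_value_on_m_sqrt_add_n
    (D d : ℕ) (hD : 4 < D) (hd : d = D / 4) (h4 : 4 ∣ D) (h8 : ¬ 8 ∣ D)
    (K : Type) [Field K] [NumberField K] [Algebra K ℂ]
    (hdeg : Module.finrank ℚ K = 2)
    (hdisc : NumberField.discr K = -(D : ℤ))
    (w : 𝓞 K) (hw : w ^ 2 = -(d : 𝓞 K))
    (hwim : 0 < (algebraMap K ℂ (algebraMap (𝓞 K) K w)).im)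
    (hgen : Algebra.adjoin ℤ {w} = ⊤)
    (p2 : Ideal (𝓞 K)) (hp2 : p2 = Ideal.span {2, 1 + w})
    (f : Ideal (𝓞 K)) (hf : f = p2 ^ 3 * Ideal.span {w})
    (ε : ((𝓞 K) ⧸ f)ˣ →* ℂˣ)
    (hε : ∀ (u : ((𝓞 K) ⧸ f)ˣ) (β : 𝓞 K) (j : ℕ) (n : ℤ),
      (u : (𝓞 K) ⧸ f) = Ideal.Quotient.mk f β →
      β - w ^ j ∈ p2 ^ 3 → β - (n : 𝓞 K) ∈ Ideal.span {w} →
      ((ε u : ℂˣ) : ℂ) = Complex.I ^ j * ((jacobiSym n d : ℤ) : ℂ)) :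
    ∀ m n : ℤ, ∀ u : ((𝓞 K) ⧸ f)ˣ,
      IsCoprime (Ideal.span {((m : 𝓞 K) * w + (n : 𝓞 K))}) (Ideal.span {(D : 𝓞 K)}) →
      (u : (𝓞 K) ⧸ f) = Ideal.Quotient.mk f ((m : 𝓞 K) * w + (n : 𝓞 K)) →
      ((m % 4 = 0 → 0 < n →
          ((ε u : ℂˣ) : ℂ) = ((jacobiSym (-(D : ℤ)) n.toNat : ℤ) : ℂ)) ∧
        (m % 4 = 2 → 0 < n →
          ((ε u : ℂˣ) : ℂ) = -((jacobiSym (-(D : ℤ)) n.toNat : ℤ) : ℂ)) ∧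
        (n % 4 = 0 → 0 < m →
          ((ε u : ℂˣ) : ℂ) =
            Complex.I * (-1 : ℂ) ^ ((m - 1) / 2) * ((jacobiSym n d : ℤ) : ℂ)) ∧
        (n % 4 = 2 → 0 < m →
          ((ε u : ℂˣ) : ℂ) =
            -(Complex.I * (-1 : ℂ) ^ ((m - 1) / 2) * ((jacobiSym n d : ℤ) : ℂ)))) :=
  eps_value_on_m_sqrt_add_n_general D d hd h4 h8 K w hw hgen p2 hp2 f ε hε
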